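/- arXiv:1908.09821 — 2 statements merged into one kernel-verified Lean document; each statement's English description precedes it below -/
import Mathlib

section
/- Let λ be a weak composition of n and w ∈ S_n with R(w) row-strict. Write w = v·y with i = w(n), v = s_i⋯s_{n-1}, y(n) = n. Let λ' be the composition of n−1 obtained by deleting the box labeled n from R(w). Then R(y) (the tableau of shape λ' for y ∈ S_{n−1}) is row-strict, R(y) equals R(w) with the box containing n deleted, and the Springer inversion sets satisfy inv_{λ'}(y) = inv_λ(w) \ inv_λ^n(w), where inv_λ^n(w) is the set of Springer inversions of R(w) whose larger entry is n. -/
open Matrix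

attribute [local instance] Classical.propDecidable

noncomputable section

/-- Label of the box in row `i` (0-indexed from the top), column `j` (0-indexed) of the base
filling of the weak composition `lam`: columns filled left to right, each column bottom to top,
labels `1,…,n`. -/
def baseLabel (lam : List ℕ) (i j : ℕ) : ℕ :=
  (∑ i' ∈ Finset.range lam.length, min (lam.getD i' 0) j) +
    ((Finset.Ico i lam.length).filter (fun i' => j < lam.getD i' 0)).card

def IsBox (lam : List ℕ) (i j : ℕ) : Prop :=
  i < lam.length ∧ j < lam.getD i 0

/-- The nilpotent matrix `X_λ = Σ E_{ℓ r}` over pairs where the box labeled `r` is directly right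
of the box labeled `ℓ` in the base filling (labels are 1-indexed; matrix indices 0-indexed). -/
def Xlam (n : ℕ) (lam : List ℕ) : Matrix (Fin n) (Fin n) ℂ :=
  fun ℓ r => if (∃ i j, IsBox lam i (j+1) ∧ baseLabel lam i j = (ℓ : ℕ) + 1 ∧
      baseLabel lam i (j+1) = (r : ℕ) + 1) then 1 else 0

def IsFullFlag (n : ℕ) (V : ℕ → Submodule ℂ (Fin n → ℂ)) : Prop :=
  V 0 = ⊥ ∧ (∀ i, V i ≤ V (i+1)) ∧ ∀ i, i ≤ n → Module.finrank ℂ (V i) = i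

def InHess (n : ℕ) (X : Matrix (Fin n) (Fin n) ℂ) (h : ℕ → ℕ)
    (V : ℕ → Submodule ℂ (Fin n → ℂ)) : Prop :=
  ∀ i, i ≤ n → ∀ v ∈ V i, X.mulVec v ∈ V (h i)

/-- The flag `wE_•`, whose `k`-th space is spanned by `e_{w(1)},…,e_{w(k)}` (0-indexed). -/
def permFlag (n : ℕ) (w : Equiv.Perm (Fin n)) : ℕ → Submodule ℂ (Fin n → ℂ) :=
  fun k => Submodule.span ℂ {v | ∃ j : Fin n, (j : ℕ) < k ∧ v = Pi.single (w j) (1 : ℂ)}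

/-- The flag whose `k`-th space is spanned by the first `k` columns of `g`. -/
def matFlag (n : ℕ) (g : Matrix (Fin n) (Fin n) ℂ) : ℕ → Submodule ℂ (Fin n → ℂ) :=
  fun k => Submodule.span ℂ {c | ∃ j : Fin n, (j : ℕ) < k ∧ c = fun a => g a j}

def permMat (n : ℕ) (σ : Equiv.Perm (Fin n)) : Matrix (Fin n) (Fin n) ℂ :=
  fun a b => if σ b = a then 1 else 0

def invSet (n : ℕ) (w : Equiv.Perm (Fin n)) : Finset (Fin n × Fin n) :=
  Finset.univ.filter (fun p => p.2 < p.1 ∧ w p.1 < w p.2)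

def blen (n : ℕ) (w : Equiv.Perm (Fin n)) : ℕ := (invSet n w).card

open Fin.NatCast in
/-- `v = s_i s_{i+1} ⋯ s_{n-1}` (0-indexed simple transpositions `swap j (j+1)`). -/
def vPerm (n : ℕ) (i : ℕ) : Equiv.Perm (Fin (n+1)) :=
  ((List.Ico i n).map (fun j : ℕ => Equiv.swap (j : Fin (n+1)) ((j+1 : ℕ) : Fin (n+1)))).prod

/-- `R(w)` is row-strict: the entry in the box labeled `m` of the base filling is `w⁻¹(m)`,
so entry `p` (0-indexed) occupies the box whose base label is `w(p)+1`. -/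
def RowStrictT (n : ℕ) (lam : List ℕ) (w : Equiv.Perm (Fin n)) : Prop :=
  ∀ i j, IsBox lam i (j+1) → ∀ p q : Fin n,
    (w p : ℕ) + 1 = baseLabel lam i j → (w q : ℕ) + 1 = baseLabel lam i (j+1) → p < q

def HStrictT (n : ℕ) (lam : List ℕ) (h : ℕ → ℕ) (w : Equiv.Perm (Fin n)) : Prop :=
  ∀ i j, IsBox lam i (j+1) → ∀ p q : Fin n,
    (w p : ℕ) + 1 = baseLabel lam i j → (w q : ℕ) + 1 = baseLabel lam i (j+1) →
      (p : ℕ) + 1 ≤ h ((q : ℕ) + 1)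

/-- `(k,ℓ)` is a Hessenberg inversion of `R(w)` (entries 0-indexed: values are index+1). -/
def HessInvT (n : ℕ) (lam : List ℕ) (h : ℕ → ℕ) (w : Equiv.Perm (Fin n)) (k ℓ : Fin n) : Prop :=
  ℓ < k ∧ ∃ ik jk il jl : ℕ, IsBox lam ik jk ∧ IsBox lam il jl ∧
    baseLabel lam ik jk = (w k : ℕ) + 1 ∧ baseLabel lam il jl = (w ℓ : ℕ) + 1 ∧
    (jk < jl ∨ (jk = jl ∧ il < ik)) ∧
    (∀ r : Fin n, IsBox lam il (jl + 1) → (w r : ℕ) + 1 = baseLabel lam il (jl + 1) →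
      (k : ℕ) + 1 ≤ h ((r : ℕ) + 1))

/-- Springer inversions: Hessenberg inversions for `h = (0,1,…,n-1)`, i.e. `h(i) = i - 1`. -/
def SpringerInvT (n : ℕ) (lam : List ℕ) (w : Equiv.Perm (Fin n)) (k ℓ : Fin n) : Prop :=
  HessInvT n lam (fun m => m - 1) w k ℓ

/-- The box labeled `b+1` is directly right of the box labeled `a+1` in the base filling. -/
def RightNbr (lam : List ℕ) (a b : ℕ) : Prop :=
  ∃ i j, IsBox lam i (j+1) ∧ baseLabel lam i j = a + 1 ∧ baseLabel lam i (j+1) = b + 1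

/-- The box labeled `a+1` is at the end of its row in the base filling. -/
def EndOfRow (lam : List ℕ) (a : ℕ) : Prop :=
  ∃ i j, IsBox lam i j ∧ ¬ IsBox lam i (j+1) ∧ baseLabel lam i j = a + 1

def IsUpperUnip (n : ℕ) (g : Matrix (Fin n) (Fin n) ℂ) : Prop :=
  (∀ i, g i i = 1) ∧ ∀ i j : Fin n, j < i → g i j = 0

/-- `U_i`: upper unipotent matrices whose off-diagonal entries are supported in row `i`. -/
def InUi (n : ℕ) (i : Fin n) (g : Matrix (Fin n) (Fin n) ℂ) : Prop :=
  IsUpperUnip n g ∧ ∀ a b : Fin n, a ≠ b → g a b ≠ 0 → a = i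

/-- `U_0`: upper unipotent matrices of `GL_n` embedded in `GL_{n+1}` (last column trivial). -/
def InU0 (n : ℕ) (g : Matrix (Fin (n+1)) (Fin (n+1)) ℂ) : Prop :=
  IsUpperUnip (n+1) g ∧ ∀ a : Fin (n+1), a ≠ Fin.last n → g a (Fin.last n) = 0

/-- The element of `B_k(w)` with coordinates `x`: it sends `e_{w(j)} = X_λ^m e_{w(ℓ)}` to
`e_{w(j)} + x ℓ • X_λ^m e_{w(k)}` for Springer inversions `(k,ℓ)`, fixing all other `e_{w(j)}`. -/
def BkMat (n : ℕ) (lam : List ℕ) (w : Equiv.Perm (Fin n)) (k : Fin n) (x : Fin n → ℂ) :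
    Matrix (Fin n) (Fin n) ℂ :=
  1 + ∑ ℓ : Fin n, if SpringerInvT n lam w k ℓ then
      x ℓ • (∑ m ∈ Finset.range n,
        (Xlam n lam) ^ m * Matrix.single (w k) (w ℓ) (1 : ℂ) * ((Xlam n lam)ᵀ) ^ m)
    else 0

/-- The product `g_n g_{n-1} ⋯ g_2` of elements `g_k ∈ B_k(w)` with coordinates `x k`. -/
def bigB (n : ℕ) (lam : List ℕ) (w : Equiv.Perm (Fin n)) (x : Fin n → Fin n → ℂ) :
    Matrix (Fin n) (Fin n) ℂ :=
  ((List.ofFn (fun k : Fin n => BkMat n lam w k (x k))).reverse).prod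

/- Abstract fillings `T : row → column → value` of the diagram of `lam`, values in `[1, n]`. -/

def RowStrictF (lam : List ℕ) (T : ℕ → ℕ → ℕ) : Prop :=
  ∀ i j, IsBox lam i (j+1) → T i j < T i (j+1)

def HStrictF (lam : List ℕ) (h : ℕ → ℕ) (T : ℕ → ℕ → ℕ) : Prop :=
  ∀ i j, IsBox lam i (j+1) → T i j ≤ h (T i (j+1))

def GoodFilling (lam : List ℕ) (T : ℕ → ℕ → ℕ) : Prop :=
  (∀ i j, IsBox lam i j → 1 ≤ T i j ∧ T i j ≤ lam.sum) ∧
  (∀ m, 1 ≤ m → m ≤ lam.sum → ∃ i j, IsBox lam i j ∧ T i j = m) ∧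
  (∀ i j i' j', IsBox lam i j → IsBox lam i' j' → T i j = T i' j' → i = i' ∧ j = j')

def HessInvF (lam : List ℕ) (h : ℕ → ℕ) (T : ℕ → ℕ → ℕ) (k ℓ : ℕ) : Prop :=
  ℓ < k ∧ ∃ ik jk il jl : ℕ, IsBox lam ik jk ∧ IsBox lam il jl ∧
    T ik jk = k ∧ T il jl = ℓ ∧
    (jk < jl ∨ (jk = jl ∧ il < ik)) ∧
    (IsBox lam il (jl + 1) → k ≤ h (T il (jl + 1)))

/-- `S` is obtained from `T` by sorting each column increasingly from top to bottom:
same column entries (as sets, entries being distinct), with columns of `S` increasing. -/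
def ColSortedOf (lam : List ℕ) (T S : ℕ → ℕ → ℕ) : Prop :=
  (∀ j m, (∃ i, IsBox lam i j ∧ T i j = m) ↔ (∃ i, IsBox lam i j ∧ S i j = m)) ∧
  (∀ i j, IsBox lam i j → IsBox lam (i+1) j → S i j < S (i+1) j)

def IsPartitionL (lam : List ℕ) : Prop :=
  ∀ i i', i ≤ i' → lam.getD i' 0 ≤ lam.getD i 0

def hessInvCount (lam : List ℕ) (h : ℕ → ℕ) (T : ℕ → ℕ → ℕ) : ℕ :=
  (((Finset.range (lam.sum + 1)) ×ˢ (Finset.range (lam.sum + 1))).filter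
    (fun p => HessInvF lam h T p.1 p.2)).card

def Hspace (n : ℕ) (h : ℕ → ℕ) : Submodule ℂ (Matrix (Fin n) (Fin n) ℂ) :=
  Submodule.span ℂ
    {A | ∃ i j : Fin n, (i : ℕ) + 1 ≤ h ((j : ℕ) + 1) ∧ A = Matrix.single i j (1 : ℂ)}

/-- Left-nested iterated bracket `[f (m), [f (m-1), [⋯ [f 1, f 0]]]]`. -/
def iterBr (n : ℕ) (f : ℕ → Matrix (Fin n) (Fin n) ℂ) : ℕ → Matrix (Fin n) (Fin n) ℂ
  | 0 => f 0
  | (m+1) => f (m+1) * iterBr n f m - iterBr n f m * f (m+1)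

/-! Row-strictness puts the largest entry `n` at the end of its row, so deleting its box leaves
the diagram of `λ'`. The base filling of `λ'` is that of `λ` with the label `w(n)` removed and the
larger labels lowered by one, and `y = v⁻¹ w` does the same to the values of `w`, because `v` fixes
the values below `w(n)`, raises those from `w(n)` to `n - 1` by one and sends `n` to `w(n)`.
Hence `R(y)` and `R(w)` have the same entry in every box of `λ'`; row-strictness and Springer
inversions only look at boxes and their entries, so they transfer, apart from the inversions whose
larger entry `n` sits in the deleted box. -/

open Finset

lemma List.sum_eq_sum_range_getD (l : List ℕ) :
    l.sum = ∑ i ∈ Finset.range l.length, l.getD i 0 := by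
  induction l with
  | nil => simp
  | cons a l ih =>
      rw [List.sum_cons, List.length_cons, Finset.sum_range_succ', ih]
      simp [add_comm]

lemma List.getD_set_of_ne (l : List ℕ) {i i' : ℕ} (h : i ≠ i') (v : ℕ) :
    (l.set i v).getD i' 0 = l.getD i' 0 := by
  simp [List.getD_eq_getElem?_getD, List.getElem?_set_ne h]

lemma List.getD_set_self (l : List ℕ) {i : ℕ} (hi : i < l.length) (v : ℕ) :
    (l.set i v).getD i 0 = v := by
  simp [List.getD_eq_getElem?_getD, hi]

lemma baseLabel_eq_sum (lam : List ℕ) (a b : ℕ) :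
    baseLabel lam a b = ∑ i ∈ range lam.length,
      (min (lam.getD i 0) b + if a ≤ i ∧ b < lam.getD i 0 then 1 else 0) := by
  rw [baseLabel, sum_add_distrib, card_filter, ← sum_filter, ← sum_filter]
  congr 2
  ext i
  simp only [mem_filter, mem_Ico, mem_range]
  tauto

lemma baseLabel_le_sum (lam : List ℕ) (a b : ℕ) : baseLabel lam a b ≤ lam.sum := by
  rw [baseLabel_eq_sum, List.sum_eq_sum_range_getD]
  refine sum_le_sum fun i _ => ?_
  split_ifs <;> omega

lemma one_le_baseLabel {lam : List ℕ} {a b : ℕ} (h : IsBox lam a b) : 1 ≤ baseLabel lam a b := by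
  rw [baseLabel_eq_sum]
  refine le_trans ?_ (single_le_sum (fun _ _ => Nat.zero_le _) (mem_range.mpr h.1))
  rw [if_pos ⟨le_rfl, h.2⟩]
  omega

lemma baseLabel_lt_baseLabel {lam : List ℕ} {a b a' b' : ℕ} (h' : IsBox lam a' b')
    (hlt : b < b' ∨ (b = b' ∧ a' < a)) : baseLabel lam a b < baseLabel lam a' b' := by
  rw [baseLabel_eq_sum, baseLabel_eq_sum]
  apply sum_lt_sum
  · intro i _
    split_ifs <;> omega
  · refine ⟨a', mem_range.mpr h'.1, ?_⟩
    have := h'.2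
    split_ifs <;> omega

lemma baseLabel_injOn {lam : List ℕ} {a b a' b' : ℕ} (h : IsBox lam a b) (h' : IsBox lam a' b')
    (heq : baseLabel lam a b = baseLabel lam a' b') : a = a' ∧ b = b' := by
  by_contra hne
  rcases lt_trichotomy b b' with hb | rfl | hb
  · exact (baseLabel_lt_baseLabel h' (.inl hb)).ne heq
  · rcases lt_trichotomy a a' with ha | rfl | ha
    · exact (baseLabel_lt_baseLabel h (.inr ⟨rfl, ha⟩)).ne' heq
    · exact hne ⟨rfl, rfl⟩
    · exact (baseLabel_lt_baseLabel h' (.inr ⟨rfl, ha⟩)).ne heq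
  · exact (baseLabel_lt_baseLabel h (.inl hb)).ne' heq

lemma exists_val_add_one_eq_baseLabel {n : ℕ} {lam : List ℕ} (w : Equiv.Perm (Fin n))
    (hn : lam.sum = n) {a b : ℕ} (hab : IsBox lam a b) :
    ∃ q : Fin n, (w q : ℕ) + 1 = baseLabel lam a b := by
  have := one_le_baseLabel hab
  have := baseLabel_le_sum lam a b
  refine ⟨w.symm ⟨baseLabel lam a b - 1, by omega⟩, ?_⟩
  rw [Equiv.apply_symm_apply, Fin.val_mk]
  omega

lemma getD_eq_succ_of_rowStrictT {n : ℕ} {lam : List ℕ} {w : Equiv.Perm (Fin (n+1))}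
    {i0 j0 : ℕ} (hn : lam.sum = n + 1) (hrs : RowStrictT (n+1) lam w) (hbox : IsBox lam i0 j0)
    (hlab : baseLabel lam i0 j0 = (w (Fin.last n) : ℕ) + 1) : lam.getD i0 0 = j0 + 1 := by
  by_contra hne
  have hb : IsBox lam i0 (j0 + 1) := ⟨hbox.1, by have := hbox.2; omega⟩
  obtain ⟨q, hq⟩ := exists_val_add_one_eq_baseLabel w hn hb
  exact (Fin.le_last q).not_gt (hrs i0 j0 hb _ q hlab.symm hq)

def succAboveNat (c m : ℕ) : ℕ := if m < c then m else m + 1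

lemma succAboveNat_succ_succ (c m : ℕ) : succAboveNat (c + 1) (m + 1) = succAboveNat c m + 1 := by
  unfold succAboveNat
  split_ifs <;> omega

lemma succAboveNat_injective (c : ℕ) : Function.Injective (succAboveNat c) := by
  intro m m' h
  unfold succAboveNat at h
  split_ifs at h <;> omega

lemma succAboveNat_ne (c m : ℕ) : succAboveNat c m ≠ c := by
  unfold succAboveNat
  split_ifs <;> omega

section EraseLastBox

variable {lam : List ℕ} {i0 j0 : ℕ}

lemma isBox_set_iff (hi0 : i0 < lam.length) (hrow : lam.getD i0 0 = j0 + 1) (a b : ℕ) :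
    IsBox (lam.set i0 j0) a b ↔ IsBox lam a b ∧ ¬(a = i0 ∧ b = j0) := by
  unfold IsBox
  rw [List.length_set]
  rcases eq_or_ne i0 a with rfl | ha
  · rw [List.getD_set_self _ hi0, hrow]
    omega
  · rw [List.getD_set_of_ne _ ha]
    tauto

lemma sum_set_add_one (hi0 : i0 < lam.length) (hrow : lam.getD i0 0 = j0 + 1) :
    (lam.set i0 j0).sum + 1 = lam.sum := by
  rw [List.sum_eq_sum_range_getD, List.sum_eq_sum_range_getD, List.length_set,
    ← add_sum_erase _ _ (mem_range.mpr hi0), ← add_sum_erase _ _ (mem_range.mpr hi0),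
    List.getD_set_self _ hi0, hrow,
    sum_congr rfl fun i hi => List.getD_set_of_ne _ (ne_of_mem_erase hi).symm _]
  ring

lemma baseLabel_set (hi0 : i0 < lam.length) (hrow : lam.getD i0 0 = j0 + 1) (a b : ℕ) :
    baseLabel lam a b = baseLabel (lam.set i0 j0) a b + (if j0 < b then 1 else 0) +
      (if a ≤ i0 ∧ b = j0 then 1 else 0) := by
  rw [baseLabel_eq_sum, baseLabel_eq_sum, List.length_set,
    ← add_sum_erase _ _ (mem_range.mpr hi0), ← add_sum_erase _ _ (mem_range.mpr hi0),
    List.getD_set_self _ hi0, hrow]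
  have hrest : ∀ i ∈ (range lam.length).erase i0, (lam.set i0 j0).getD i 0 = lam.getD i 0 :=
    fun i hi => List.getD_set_of_ne _ (ne_of_mem_erase hi).symm _
  conv_rhs => rw [sum_congr rfl fun i hi => by rw [hrest i hi]]
  split_ifs <;> omega

lemma baseLabel_eq_succAboveNat {a b : ℕ} (hbox : IsBox lam i0 j0)
    (hrow : lam.getD i0 0 = j0 + 1) (hab : IsBox (lam.set i0 j0) a b) :
    baseLabel lam a b = succAboveNat (baseLabel lam i0 j0) (baseLabel (lam.set i0 j0) a b) := by
  obtain ⟨hab, hne⟩ := (isBox_set_iff hbox.1 hrow a b).1 hab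
  have hshift := baseLabel_set hbox.1 hrow a b
  unfold succAboveNat
  by_cases hafter : j0 < b ∨ (j0 = b ∧ a < i0)
  · have := baseLabel_lt_baseLabel hab hafter
    split_ifs at hshift ⊢ <;> omega
  · have := baseLabel_lt_baseLabel hbox (by omega : b < j0 ∨ (b = j0 ∧ i0 < a))
    split_ifs at hshift ⊢ <;> omega

end EraseLastBox

open Fin.NatCast in
lemma vPerm_of_lt {n i : ℕ} (hi : i < n) :
    vPerm n i = Equiv.swap (i : Fin (n+1)) ((i + 1 : ℕ) : Fin (n+1)) * vPerm n (i + 1) := by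
  rw [vPerm, List.Ico.eq_cons hi, List.map_cons, List.prod_cons, vPerm]

open Fin.NatCast in
lemma val_vPerm_apply {n i : ℕ} (hi : i ≤ n) (x : Fin (n+1)) :
    (vPerm n i x : ℕ) = if (x : ℕ) = n then i else succAboveNat i x := by
  induction hi using Nat.decreasingInduction with
  | self =>
    rw [vPerm, List.Ico.self_empty, List.map_nil, List.prod_nil, Equiv.Perm.one_apply]
    unfold succAboveNat
    have := x.isLt
    split_ifs <;> omega
  | of_succ i hi ih =>
    rw [vPerm_of_lt hi, Equiv.Perm.mul_apply, Equiv.swap_apply_def]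
    unfold succAboveNat at ih ⊢
    have hi0 : ((i : Fin (n+1)) : ℕ) = i := Fin.val_cast_of_lt (by omega)
    have hi1 : (((i + 1 : ℕ) : Fin (n+1)) : ℕ) = i + 1 := Fin.val_cast_of_lt (by omega)
    simp only [Fin.ext_iff, hi0, hi1]
    split_ifs at ih ⊢ <;> omega

lemma vPerm_inv_mul_apply_last {n : ℕ} (w : Equiv.Perm (Fin (n+1))) :
    ((vPerm n (w (Fin.last n)))⁻¹ * w) (Fin.last n) = Fin.last n := by
  rw [Equiv.Perm.mul_apply, Equiv.Perm.inv_eq_iff_eq, Fin.ext_iff,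
    val_vPerm_apply (Fin.is_le _), if_pos (Fin.val_last n)]

lemma val_eq_succAboveNat_vPerm_inv_mul {n : ℕ} (w : Equiv.Perm (Fin (n+1))) {p : Fin (n+1)}
    (hp : p ≠ Fin.last n) :
    (w p : ℕ) = succAboveNat (w (Fin.last n)) (((vPerm n (w (Fin.last n)))⁻¹ * w) p) := by
  set y := (vPerm n (w (Fin.last n)))⁻¹ * w
  have hyp : y p ≠ Fin.last n := fun h =>
    hp (y.injective (h.trans (vPerm_inv_mul_apply_last w).symm))
  have hwp : w p = vPerm n (w (Fin.last n)) (y p) := by simp [y]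
  rw [hwp, val_vPerm_apply (Fin.is_le _)]
  exact if_neg (Fin.val_ne_iff.mpr hyp)

/-- `R(y)`, of shape `lam'`, is `R(w)` restricted to the boxes of `lam'`. -/
def IsRestrictionT (n : ℕ) (lam : List ℕ) (w : Equiv.Perm (Fin n)) (lam' : List ℕ)
    (y : Equiv.Perm (Fin n)) : Prop :=
  (∀ a b, IsBox lam' a b → IsBox lam a b) ∧
    ∀ a b, IsBox lam' a b → ∀ p : Fin n,
      (y p : ℕ) + 1 = baseLabel lam' a b ↔ (w p : ℕ) + 1 = baseLabel lam a b

lemma isRestrictionT_set {n : ℕ} {lam : List ℕ} {w y : Equiv.Perm (Fin (n+1))} {i0 j0 : ℕ}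
    (hn : lam.sum = n + 1) (hbox : IsBox lam i0 j0) (hrow : lam.getD i0 0 = j0 + 1)
    (hlab : baseLabel lam i0 j0 = (w (Fin.last n) : ℕ) + 1) (hylast : y (Fin.last n) = Fin.last n)
    (hwy : ∀ p ≠ Fin.last n, (w p : ℕ) = succAboveNat (w (Fin.last n)) (y p)) :
    IsRestrictionT (n+1) lam w (lam.set i0 j0) y := by
  refine ⟨fun a b hab => ((isBox_set_iff hbox.1 hrow a b).1 hab).1, fun a b hab p => ?_⟩
  rw [baseLabel_eq_succAboveNat hbox hrow hab, hlab]
  rcases eq_or_ne p (Fin.last n) with rfl | hp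
  · have := baseLabel_le_sum (lam.set i0 j0) a b
    have := sum_set_add_one hbox.1 hrow
    rw [hylast, Fin.val_last]
    exact iff_of_false (by omega) (succAboveNat_ne _ _).symm
  · rw [hwy p hp, ← succAboveNat_succ_succ, (succAboveNat_injective _).eq_iff]

lemma IsRestrictionT.rowStrictT {n : ℕ} {lam lam' : List ℕ} {w y : Equiv.Perm (Fin n)}
    (hres : IsRestrictionT n lam w lam' y) (hrs : RowStrictT n lam w) : RowStrictT n lam' y := by
  intro a b hb p q hp hq
  have hb0 : IsBox lam' a b := ⟨hb.1, (Nat.lt_succ_self b).trans hb.2⟩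
  exact hrs a b (hres.1 _ _ hb) p q ((hres.2 _ _ hb0 p).1 hp) ((hres.2 _ _ hb q).1 hq)

lemma springerInvT_iff_of_isRestrictionT {n : ℕ} {lam lam' : List ℕ}
    {w y : Equiv.Perm (Fin (n+1))} {i0 j0 : ℕ} (hres : IsRestrictionT (n+1) lam w lam' y)
    (hbox : IsBox lam i0 j0) (hlab : baseLabel lam i0 j0 = (w (Fin.last n) : ℕ) + 1)
    (hbox' : ∀ a b, IsBox lam a b → (IsBox lam' a b ↔ ¬(a = i0 ∧ b = j0))) (k ℓ : Fin (n+1)) :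
    SpringerInvT (n+1) lam' y k ℓ ↔ SpringerInvT (n+1) lam w k ℓ ∧ k ≠ Fin.last n := by
  obtain ⟨hsub, hentry⟩ := hres
  have hlast : ∀ {a b} (p : Fin (n+1)), IsBox lam a b → (w p : ℕ) + 1 = baseLabel lam a b →
      (p = Fin.last n ↔ ¬IsBox lam' a b) := by
    intro a b p hab hp
    rw [hbox' a b hab, not_not]
    constructor
    · rintro rfl
      exact baseLabel_injOn hab hbox (hp.symm.trans hlab.symm)
    · rintro ⟨rfl, rfl⟩
      exact w.injective (Fin.ext (by omega))
  simp only [SpringerInvT, HessInvT]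
  constructor
  · rintro ⟨hlk, ik, jk, il, jl, hk, hl, hLk, hLl, hpos, hnbr⟩
    have hkw := (hentry _ _ hk k).1 hLk.symm
    have hklast : k ≠ Fin.last n := fun h => (hlast k (hsub _ _ hk) hkw).1 h hk
    refine ⟨⟨hlk, ik, jk, il, jl, hsub _ _ hk, hsub _ _ hl, hkw.symm,
      ((hentry _ _ hl ℓ).1 hLl.symm).symm, hpos, fun r hr hrw => ?_⟩, hklast⟩
    by_cases hr' : IsBox lam' il (jl + 1)
    · exact hnbr r hr' ((hentry _ _ hr' r).2 hrw)
    · -- the right neighbour of `ℓ` is the deleted box, whose entry `n` exceeds `k`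
      rw [← hlast r hr hrw] at hr'
      have := Fin.val_lt_last hklast
      simp only [hr', Fin.val_last]
      omega
  · rintro ⟨⟨hlk, ik, jk, il, jl, hk, hl, hLk, hLl, hpos, hnbr⟩, hklast⟩
    have hk' : IsBox lam' ik jk := not_not.mp fun h => hklast ((hlast k hk hLk.symm).2 h)
    have hl' : IsBox lam' il jl := not_not.mp fun h =>
      (Fin.le_last k).not_gt ((hlast ℓ hl hLl.symm).2 h ▸ hlk)
    exact ⟨hlk, ik, jk, il, jl, hk', hl', ((hentry _ _ hk' k).2 hLk.symm).symm,
      ((hentry _ _ hl' ℓ).2 hLl.symm).symm, hpos,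
      fun r hr hry => hnbr r (hsub _ _ hr) ((hentry _ _ hr r).1 hry)⟩

/-- for `w` with `R(w)` row-strict and canonical factorization `w = v·y`,
`y` fixes `n`, `R(y)` (of shape `λ'`, obtained by deleting the box containing the largest entry)
is row-strict and equals `R(w)` with that box deleted, and
`inv_{λ'}(y) = inv_λ(w) \ inv_λ^n(w)`. -/
theorem stmt9 (n : ℕ) (lam : List ℕ) (hn : lam.sum = n + 1)
    (w v y : Equiv.Perm (Fin (n+1)))
    (hv : v = vPerm n (w (Fin.last n) : ℕ)) (hy : y = v⁻¹ * w)
    (hrs : RowStrictT (n+1) lam w)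
    (i0 j0 : ℕ) (hbox : IsBox lam i0 j0)
    (hlab : baseLabel lam i0 j0 = (w (Fin.last n) : ℕ) + 1)
    (lam' : List ℕ) (hlam' : lam' = lam.set i0 (lam.getD i0 0 - 1)) :
    y (Fin.last n) = Fin.last n ∧
    RowStrictT (n+1) lam' y ∧
    (∀ a b : ℕ, IsBox lam' a b → ∀ p q : Fin (n+1),
      (y p : ℕ) + 1 = baseLabel lam' a b → (w q : ℕ) + 1 = baseLabel lam a b → p = q) ∧
    (∀ k ℓ : Fin (n+1),
      SpringerInvT (n+1) lam' y k ℓ ↔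
        (SpringerInvT (n+1) lam w k ℓ ∧ k ≠ Fin.last n)) := by
  have hrow := getD_eq_succ_of_rowStrictT hn hrs hbox hlab
  obtain rfl : lam' = lam.set i0 j0 := by rw [hlam', hrow, Nat.add_sub_cancel]
  subst hv hy
  have hylast := vPerm_inv_mul_apply_last w
  have hres := isRestrictionT_set hn hbox hrow hlab hylast
    fun p hp => val_eq_succAboveNat_vPerm_inv_mul w hp
  refine ⟨hylast, hres.rowStrictT hrs, fun a b hab p q hp hq => ?_,
    springerInvT_iff_of_isRestrictionT hres hbox hlab fun a b hab => ?_⟩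
  · have := (hres.2 a b hab p).1 hp
    exact w.injective (Fin.ext (by omega))
  · rw [isBox_set_iff hbox.1 hrow]
    exact and_iff_right hab
end
end

section
/- Let λ be a weak composition of n, w ∈ S_n with R(w) row-strict, 2 ≤ k ≤ n, and g_k ∈ B_k(w). Then g_k fixes e_{w(j)} for all j ≥ k, preserves the subspace span{e_{w(1)},…,e_{w(k)}}, and maps ker(X_λ) into ker(X_λ). -/
open Matrix

attribute [local instance] Classical.propDecidable

noncomputable section

/-!
Write `g_k = 1 + N`, where `N v` is a combination of the vectors `X_λ^m e_{w(k)}` with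
coefficients `x ℓ (v ᵥ* X_λ^m) (w ℓ)`, `(k, ℓ)` a Springer inversion. Row-strictness makes
`X_λ^m` upper triangular in the basis `e_{w(1)}, …, e_{w(n)}`, so `N` kills `e_{w(j)}` for
`j ≥ k > ℓ` and has range in `span {e_{w(j)} | j ≤ k}`. The `X_λ`-strings through `e_{w(k)}` and
`e_{w(ℓ)}` are disjoint, whence `N² = 0` and `1 + N` is invertible on that span. Finally, vectors
of `ker X_λ` vanish at every label outside the first column, so for them the coefficient of
`X_λ^m e_{w(k)}` can only survive when `m` is at least the column of `ℓ`; as `k` is weakly left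
of `ℓ`, then `X_λ^{m+1} e_{w(k)} = 0`.
-/

theorem Submodule.map_one_add_eq_self {R M : Type*} [Ring R] [AddCommGroup M] [Module R M]
    {S : Submodule R M} {N : Module.End R M} (hN : ∀ v ∈ S, N v ∈ S)
    (hNN : ∀ v ∈ S, N (N v) = 0) : S.map (1 + N) = S := by
  refine le_antisymm (Submodule.map_le_iff_le_comap.mpr fun v hv => S.add_mem hv (hN v hv))
    fun v hv => ⟨v - N v, S.sub_mem hv (hN v hv), ?_⟩
  simp [hNN v hv]

theorem mem_span_piSingle_of_support {ι κ R : Type*} [Fintype κ] [DecidableEq κ] [Semiring R]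
    (f : ι → κ) (P : ι → Prop) {v : κ → R} (hv : ∀ a, v a ≠ 0 → ∃ i, P i ∧ f i = a) :
    v ∈ Submodule.span R {u | ∃ i, P i ∧ u = Pi.single (f i) 1} := by
  rw [← Finset.univ_sum_single v]
  refine Submodule.sum_mem _ fun a _ => ?_
  by_cases ha : v a = 0
  · simp [ha]
  obtain ⟨i, hi, rfl⟩ := hv a ha
  rw [← mul_one (v (f i)), ← smul_eq_mul, Pi.single_smul]
  exact Submodule.smul_mem _ _ (Submodule.subset_span ⟨i, hi, rfl⟩)

theorem Matrix.pow_mul_single_mul_transpose_pow_mulVec {ι R : Type*} [Fintype ι] [DecidableEq ι]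
    [CommSemiring R] (A : Matrix ι ι R) (m : ℕ) (a c : ι) (v : ι → R) :
    (A ^ m * single a c 1 * Aᵀ ^ m) *ᵥ v = (v ᵥ* A ^ m) c • (A ^ m).col a := by
  rw [← mulVec_mulVec, ← mulVec_mulVec, ← transpose_pow, mulVec_transpose, single_mulVec,
    one_mul, ← Pi.single, ← mulVec_single_one, ← mulVec_smul]
  rw [← Pi.single_smul, smul_eq_mul, mul_one]

section BaseFilling

variable {lam : List ℕ}

theorem IsBox.of_succ {i j : ℕ} (h : IsBox lam i (j + 1)) : IsBox lam i j :=
  ⟨h.1, Nat.lt_of_succ_lt h.2⟩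

def boxesLeftOf (lam : List ℕ) (j : ℕ) : ℕ :=
  ∑ i' ∈ Finset.range lam.length, min (lam.getD i' 0) j

def colBoxesFrom (lam : List ℕ) (i j : ℕ) : Finset ℕ :=
  (Finset.Ico i lam.length).filter (fun i' => j < lam.getD i' 0)

theorem baseLabel_eq (i j : ℕ) :
    baseLabel lam i j = boxesLeftOf lam j + (colBoxesFrom lam i j).card := rfl

theorem boxesLeftOf_succ (j : ℕ) :
    boxesLeftOf lam (j + 1) = boxesLeftOf lam j + (colBoxesFrom lam 0 j).card := by
  rw [colBoxesFrom, Finset.card_filter, Nat.Ico_zero_eq_range, boxesLeftOf, boxesLeftOf,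
    ← Finset.sum_add_distrib]
  refine Finset.sum_congr rfl fun i _ => ?_
  split <;> omega

theorem boxesLeftOf_mono : Monotone (boxesLeftOf lam) :=
  fun _ _ h => Finset.sum_le_sum fun _ _ => min_le_min le_rfl h

theorem IsBox.mem_colBoxesFrom {i j : ℕ} (h : IsBox lam i j) : i ∈ colBoxesFrom lam i j :=
  Finset.mem_filter.mpr ⟨Finset.mem_Ico.mpr ⟨le_rfl, h.1⟩, h.2⟩

theorem boxesLeftOf_lt_baseLabel {i j : ℕ} (h : IsBox lam i j) :
    boxesLeftOf lam j < baseLabel lam i j := by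
  rw [baseLabel_eq]
  have := Finset.card_pos.mpr ⟨i, h.mem_colBoxesFrom⟩
  omega

theorem baseLabel_le_boxesLeftOf_succ (i j : ℕ) :
    baseLabel lam i j ≤ boxesLeftOf lam (j + 1) := by
  rw [boxesLeftOf_succ, baseLabel_eq]
  have : (colBoxesFrom lam i j).card ≤ (colBoxesFrom lam 0 j).card :=
    Finset.card_le_card (Finset.filter_subset_filter _ (Finset.Ico_subset_Ico (Nat.zero_le i) le_rfl))
  omega

theorem IsBox.baseLabel_pos {i j : ℕ} (h : IsBox lam i j) : 0 < baseLabel lam i j :=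
  (Nat.zero_le _).trans_lt (boxesLeftOf_lt_baseLabel h)

theorem baseLabel_lt_of_col_lt {i j i' j' : ℕ} (h' : IsBox lam i' j') (hj : j < j') :
    baseLabel lam i j < baseLabel lam i' j' :=
  calc baseLabel lam i j ≤ boxesLeftOf lam (j + 1) := baseLabel_le_boxesLeftOf_succ i j
    _ ≤ boxesLeftOf lam j' := boxesLeftOf_mono hj
    _ < baseLabel lam i' j' := boxesLeftOf_lt_baseLabel h'

theorem baseLabel_lt_of_row_lt {i i' j : ℕ} (h : IsBox lam i j) (hi : i < i') :
    baseLabel lam i' j < baseLabel lam i j := by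
  rw [baseLabel_eq, baseLabel_eq, add_lt_add_iff_left]
  refine Finset.card_lt_card ⟨Finset.filter_subset_filter _ (Finset.Ico_subset_Ico hi.le le_rfl),
    fun hsub => ?_⟩
  have := Finset.mem_Ico.mp (Finset.mem_filter.mp (hsub h.mem_colBoxesFrom)).1
  omega

theorem baseLabel_inj {i j i' j' : ℕ} (h : IsBox lam i j) (h' : IsBox lam i' j')
    (he : baseLabel lam i j = baseLabel lam i' j') : i = i' ∧ j = j' := by
  obtain rfl : j = j' := by
    rcases lt_trichotomy j j' with hj | hj | hj
    · exact absurd he (baseLabel_lt_of_col_lt h' hj).ne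
    · exact hj
    · exact absurd he (baseLabel_lt_of_col_lt h hj).ne'
  refine ⟨?_, rfl⟩
  rcases lt_trichotomy i i' with hi | hi | hi
  · exact absurd he (baseLabel_lt_of_row_lt h hi).ne'
  · exact hi
  · exact absurd he (baseLabel_lt_of_row_lt h' hi).ne

theorem IsBox.exists_baseLabel_eq {n i j : ℕ} (h : IsBox lam i j) (hn : baseLabel lam i j ≤ n) :
    ∃ a : Fin n, baseLabel lam i j = a + 1 :=
  by
  have := h.baseLabel_pos
  exact ⟨⟨baseLabel lam i j - 1, by omega⟩, by simp; omega⟩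

end BaseFilling

theorem Matrix.exists_ne_zero_of_mul_apply_ne_zero {ι α : Type*} [Fintype ι]
    [NonUnitalNonAssocSemiring α] {A B : Matrix ι ι α} {a c : ι} (h : (A * B) a c ≠ 0) :
    ∃ b, A a b ≠ 0 ∧ B b c ≠ 0 := by
  obtain ⟨b, -, hb⟩ := Finset.exists_ne_zero_of_sum_ne_zero h
  exact ⟨b, left_ne_zero_of_mul hb, right_ne_zero_of_mul hb⟩

section Xlam

variable {n : ℕ} {lam : List ℕ}

theorem Xlam_apply (a b : Fin n) : Xlam n lam a b = if RightNbr lam a b then 1 else 0 := rfl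

theorem rightNbr_of_Xlam_apply_ne_zero {a b : Fin n} (h : Xlam n lam a b ≠ 0) :
    RightNbr lam a b := by
  by_contra hab
  exact h (by rw [Xlam_apply, if_neg hab])

theorem Xlam_row_eq_single {i j : ℕ} {a b : Fin n} (hbox : IsBox lam i (j + 1))
    (ha : baseLabel lam i j = a + 1) (hb : baseLabel lam i (j + 1) = b + 1) :
    Xlam n lam a = Pi.single b 1 := by
  ext b'
  by_cases hb' : b' = b
  · subst hb'
    rw [Xlam_apply, if_pos ⟨i, j, hbox, ha, hb⟩, Pi.single_eq_same]
  · rw [Pi.single_eq_of_ne hb', Xlam_apply, if_neg]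
    rintro ⟨i', j', hbox', ha', hb''⟩
    obtain ⟨rfl, rfl⟩ := baseLabel_inj hbox.of_succ hbox'.of_succ (ha.trans ha'.symm)
    exact hb' (Fin.ext (by omega))

theorem box_sub_of_Xlam_pow_apply_ne_zero {m : ℕ} {b c : Fin n} {i j : ℕ}
    (h : (Xlam n lam ^ m) b c ≠ 0) (hbox : IsBox lam i j) (hc : baseLabel lam i j = c + 1) :
    m ≤ j ∧ IsBox lam i (j - m) ∧ baseLabel lam i (j - m) = b + 1 := by
  induction m generalizing c j with
  | zero =>
    obtain rfl : b = c := by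
      by_contra hbc
      exact h (Matrix.one_apply_ne hbc)
    simpa using ⟨hbox, hc⟩
  | succ m ih =>
    rw [pow_succ] at h
    obtain ⟨c', h1, h2⟩ := Matrix.exists_ne_zero_of_mul_apply_ne_zero h
    obtain ⟨i', j', hbox', hc', hc''⟩ := rightNbr_of_Xlam_apply_ne_zero h2
    obtain ⟨rfl, rfl⟩ := baseLabel_inj hbox hbox' (hc.trans hc''.symm)
    obtain ⟨hm, hbox'', hb⟩ := ih h1 hbox'.of_succ hc'
    exact ⟨by omega, by simpa using hbox'', by simpa using hb⟩

theorem Xlam_pow_col_eq_zero {m : ℕ} {c : Fin n} {i j : ℕ} (hbox : IsBox lam i j)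
    (hc : baseLabel lam i j = c + 1) (hm : j < m) : (Xlam n lam ^ m).col c = 0 := by
  ext a
  by_contra h
  have := (box_sub_of_Xlam_pow_apply_ne_zero h hbox hc).1
  omega

theorem apply_eq_zero_of_Xlam_mulVec_eq_zero {v : Fin n → ℂ} (hv : Xlam n lam *ᵥ v = 0)
    {b : Fin n} {i j : ℕ} (hbox : IsBox lam i (j + 1)) (hb : baseLabel lam i (j + 1) = b + 1) :
    v b = 0 := by
  have hlt := baseLabel_lt_of_col_lt (i := i) hbox (Nat.lt_succ_self j)
  obtain ⟨a, ha⟩ := hbox.of_succ.exists_baseLabel_eq (n := n) (by omega)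
  calc v b = (Xlam n lam *ᵥ v) a := by
        rw [Matrix.mulVec, Xlam_row_eq_single hbox ha hb, single_one_dotProduct]
    _ = 0 := by rw [hv]; rfl

theorem vecMul_Xlam_pow_apply_eq_zero {v : Fin n → ℂ} (hv : Xlam n lam *ᵥ v = 0) {m : ℕ}
    {c : Fin n} {i j : ℕ} (hbox : IsBox lam i j) (hc : baseLabel lam i j = c + 1) (hm : m < j) :
    (v ᵥ* Xlam n lam ^ m) c = 0 := by
  rw [vecMul, dotProduct]
  refine Finset.sum_eq_zero fun b _ => ?_
  by_cases hbc : (Xlam n lam ^ m) b c = 0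
  · rw [hbc, mul_zero]
  obtain ⟨-, hbox', hb⟩ := box_sub_of_Xlam_pow_apply_ne_zero hbc hbox hc
  obtain ⟨d, hd⟩ : ∃ d, j - m = d + 1 := ⟨j - m - 1, by omega⟩
  rw [hd] at hbox' hb
  rw [apply_eq_zero_of_Xlam_mulVec_eq_zero hv hbox' hb, zero_mul]

end Xlam

section RowStrict

variable {n : ℕ} {lam : List ℕ} {w : Equiv.Perm (Fin n)}

theorem RowStrictT.le_of_Xlam_pow_apply_ne_zero (hrs : RowStrictT n lam w) {m : ℕ} {p q : Fin n}
    (h : (Xlam n lam ^ m) (w p) (w q) ≠ 0) : p ≤ q := by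
  induction m generalizing q with
  | zero =>
    by_contra hpq
    exact h (Matrix.one_apply_ne (w.injective.ne (ne_of_not_le hpq)))
  | succ m ih =>
    rw [pow_succ] at h
    obtain ⟨c, h1, h2⟩ := Matrix.exists_ne_zero_of_mul_apply_ne_zero h
    obtain ⟨i, j, hbox, hc, hq⟩ := rightNbr_of_Xlam_apply_ne_zero h2
    have hcq : w.symm c < q := hrs i j hbox _ q (by simp [hc]) hq.symm
    exact (ih (q := w.symm c) (by simpa using h1)).trans hcq.le

theorem RowStrictT.lt_of_col_lt (hrs : RowStrictT n lam w) {i j j' : ℕ} {p q : Fin n}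
    (hbox : IsBox lam i j') (hj : j < j') (hp : baseLabel lam i j = w p + 1)
    (hq : baseLabel lam i j' = w q + 1) : p < q := by
  induction j', hj using Nat.le_induction generalizing q with
  | base => exact hrs i j hbox p q hp.symm hq.symm
  | succ j' hj ih =>
    have hlt := baseLabel_lt_of_col_lt (i := i) hbox (Nat.lt_succ_self j')
    obtain ⟨a, ha⟩ := hbox.of_succ.exists_baseLabel_eq (n := n) (by omega)
    have hpa : p < w.symm a := ih hbox.of_succ (by simpa using ha)
    exact hpa.trans (hrs i j' hbox _ q (by simpa using ha.symm) hq.symm)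

/-- The `X_λ`-strings ending at `e_{w(k)}` and `e_{w(ℓ)}` run leftwards along the rows of the
boxes of `k` and `ℓ`; these rows differ, or they coincide with `ℓ` right of `k`, so the strings
never meet. -/
theorem HessInvT.Xlam_pow_apply_mul_Xlam_pow_apply (hrs : RowStrictT n lam w) {h : ℕ → ℕ}
    {k ℓ : Fin n} (hkℓ : HessInvT n lam h w k ℓ) (m m' : ℕ) (b : Fin n) :
    (Xlam n lam ^ m) b (w k) * (Xlam n lam ^ m') b (w ℓ) = 0 := by
  by_contra hne
  obtain ⟨hℓk, ik, jk, il, jl, hboxk, hboxl, hk, hl, hpos, -⟩ := hkℓ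
  obtain ⟨-, hbox₁, hb₁⟩ := box_sub_of_Xlam_pow_apply_ne_zero (left_ne_zero_of_mul hne) hboxk hk
  obtain ⟨-, hbox₂, hb₂⟩ := box_sub_of_Xlam_pow_apply_ne_zero (right_ne_zero_of_mul hne) hboxl hl
  obtain ⟨rfl, -⟩ := baseLabel_inj hbox₁ hbox₂ (hb₁.trans hb₂.symm)
  rcases hpos with hj | ⟨-, hi⟩
  · exact hℓk.not_gt (hrs.lt_of_col_lt hboxl hj hk hl)
  · exact hi.false

end RowStrict

section Bk

variable {n : ℕ} {lam : List ℕ} {w : Equiv.Perm (Fin n)} {k : Fin n} {x : Fin n → ℂ}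

def bkNil (n : ℕ) (lam : List ℕ) (w : Equiv.Perm (Fin n)) (k : Fin n) (x : Fin n → ℂ) :
    Matrix (Fin n) (Fin n) ℂ :=
  ∑ ℓ : Fin n, if SpringerInvT n lam w k ℓ then
      x ℓ • (∑ m ∈ Finset.range n,
        (Xlam n lam) ^ m * Matrix.single (w k) (w ℓ) (1 : ℂ) * ((Xlam n lam)ᵀ) ^ m)
    else 0

theorem BkMat_eq_one_add_bkNil : BkMat n lam w k x = 1 + bkNil n lam w k x := rfl

/-- `bkNil n lam w k x *ᵥ v = ∑ ℓ, ∑ m < n, x ℓ (v ᵥ* X_λ^m) (w ℓ) • X_λ^m e_{w(k)}`, the sum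
running over the Springer inversions `(k, ℓ)`. -/
theorem bkNil_mulVec_mem (p : Submodule ℂ (Fin n → ℂ)) (v : Fin n → ℂ)
    (h : ∀ ℓ, SpringerInvT n lam w k ℓ → ∀ m,
      (v ᵥ* Xlam n lam ^ m) (w ℓ) = 0 ∨ (Xlam n lam ^ m).col (w k) ∈ p) :
    bkNil n lam w k x *ᵥ v ∈ p := by
  rw [bkNil, sum_mulVec]
  refine p.sum_mem fun ℓ _ => ?_
  split_ifs with hkℓ
  · rw [smul_mulVec, sum_mulVec]
    refine p.smul_mem _ (p.sum_mem fun m _ => ?_)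
    rw [pow_mul_single_mul_transpose_pow_mulVec]
    rcases h ℓ hkℓ m with h0 | hm
    · rw [h0, zero_smul]
      exact p.zero_mem
    · exact p.smul_mem _ hm
  · rw [zero_mulVec]
    exact p.zero_mem

theorem bkNil_mulVec_single_eq_zero (hrs : RowStrictT n lam w) {j : Fin n} (hj : k ≤ j) :
    bkNil n lam w k x *ᵥ Pi.single (w j) 1 = 0 := by
  refine (Submodule.mem_bot ℂ).mp (bkNil_mulVec_mem ⊥ _ fun ℓ hkℓ m => Or.inl ?_)
  rw [single_one_vecMul, row_apply]
  by_contra h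
  exact (hkℓ.1.trans_le hj).not_ge (hrs.le_of_Xlam_pow_apply_ne_zero h)

theorem Xlam_pow_col_mem_span (hrs : RowStrictT n lam w) (m : ℕ) :
    (Xlam n lam ^ m).col (w k) ∈
      Submodule.span ℂ {v | ∃ j : Fin n, j ≤ k ∧ v = Pi.single (w j) (1 : ℂ)} :=
  mem_span_piSingle_of_support w (· ≤ k) fun a ha =>
    ⟨w.symm a, hrs.le_of_Xlam_pow_apply_ne_zero (by simpa using ha), w.apply_symm_apply a⟩

theorem bkNil_mulVec_bkNil_mulVec (hrs : RowStrictT n lam w) (v : Fin n → ℂ) :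
    bkNil n lam w k x *ᵥ (bkNil n lam w k x *ᵥ v) = 0 := by
  have hcol : ∀ m, (Xlam n lam ^ m).col (w k) ∈ LinearMap.ker (bkNil n lam w k x).mulVecLin := by
    refine fun m => (Submodule.mem_bot ℂ).mp (bkNil_mulVec_mem ⊥ _ fun ℓ hkℓ m' => Or.inl ?_)
    rw [vecMul, dotProduct]
    exact Finset.sum_eq_zero fun b _ => hkℓ.Xlam_pow_apply_mul_Xlam_pow_apply hrs m m' b
  exact bkNil_mulVec_mem _ v fun ℓ _ m => Or.inr (hcol m)

theorem bkNil_mulVec_mem_ker_Xlam {v : Fin n → ℂ} (hv : Xlam n lam *ᵥ v = 0) :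
    Xlam n lam *ᵥ (bkNil n lam w k x *ᵥ v) = 0 := by
  refine bkNil_mulVec_mem (LinearMap.ker (Xlam n lam).mulVecLin) v fun ℓ hkℓ m => ?_
  obtain ⟨-, ik, jk, il, jl, hboxk, hboxl, hk, hl, hpos, -⟩ := hkℓ
  by_cases hm : m < jl
  · exact Or.inl (vecMul_Xlam_pow_apply_eq_zero hv hboxl hl hm)
  · refine Or.inr ?_
    have hjk : jk < m + 1 := by omega
    rw [LinearMap.mem_ker, mulVecLin_apply, ← mulVec_single_one, mulVec_mulVec, ← pow_succ',
      mulVec_single_one, Xlam_pow_col_eq_zero hboxk hk hjk]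

end Bk

theorem stmt11_general (n : ℕ) (lam : List ℕ)
    (w : Equiv.Perm (Fin n)) (hrs : RowStrictT n lam w)
    (k : Fin n) (x : Fin n → ℂ) :
    (∀ j : Fin n, k ≤ j →
      (BkMat n lam w k x).mulVec (Pi.single (w j) 1) = Pi.single (w j) 1) ∧
    (Submodule.map (BkMat n lam w k x).mulVecLin
        (Submodule.span ℂ {v | ∃ j : Fin n, j ≤ k ∧ v = Pi.single (w j) (1 : ℂ)}) =
      Submodule.span ℂ {v | ∃ j : Fin n, j ≤ k ∧ v = Pi.single (w j) (1 : ℂ)}) ∧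
    (∀ v ∈ LinearMap.ker (Xlam n lam).mulVecLin,
      (BkMat n lam w k x).mulVec v ∈ LinearMap.ker (Xlam n lam).mulVecLin) := by
  simp only [BkMat_eq_one_add_bkNil, LinearMap.mem_ker, mulVecLin_apply, add_mulVec, one_mulVec]
  refine ⟨fun j hj => ?_, ?_, fun v hv => ?_⟩
  · rw [bkNil_mulVec_single_eq_zero hrs hj, add_zero]
  · rw [mulVecLin_add, mulVecLin_one, ← Module.End.one_eq_id]
    exact Submodule.map_one_add_eq_self
      (fun v _ => bkNil_mulVec_mem _ v fun _ _ m => Or.inr (Xlam_pow_col_mem_span hrs m))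
      (fun v _ => bkNil_mulVec_bkNil_mulVec hrs v)
  · rw [mulVec_add, hv, bkNil_mulVec_mem_ker_Xlam hv, add_zero]

/-- each `g_k ∈ B_k(w)` fixes `e_{w(j)}` for `j ≥ k`, preserves
`span{e_{w(1)},…,e_{w(k)}}`, and maps `ker X_λ` into `ker X_λ`. -/
theorem stmt11 (n : ℕ) (lam : List ℕ) (hn : lam.sum = n)
    (w : Equiv.Perm (Fin n)) (hrs : RowStrictT n lam w)
    (k : Fin n) (hk : 1 ≤ (k : ℕ))
    (x : Fin n → ℂ) (hx : ∀ ℓ, ¬ SpringerInvT n lam w k ℓ → x ℓ = 0) :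
    (∀ j : Fin n, k ≤ j →
      (BkMat n lam w k x).mulVec (Pi.single (w j) 1) = Pi.single (w j) 1) ∧
    (Submodule.map (BkMat n lam w k x).mulVecLin
        (Submodule.span ℂ {v | ∃ j : Fin n, j ≤ k ∧ v = Pi.single (w j) (1 : ℂ)}) =
      Submodule.span ℂ {v | ∃ j : Fin n, j ≤ k ∧ v = Pi.single (w j) (1 : ℂ)}) ∧
    (∀ v ∈ LinearMap.ker (Xlam n lam).mulVecLin,
      (BkMat n lam w k x).mulVec v ∈ LinearMap.ker (Xlam n lam).mulVecLin) :=
  stmt11_general n lam w hrs k x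
end
end
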